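/- Let R be a commutative ring, let V and W be R-modules, let b, k ∈ ℕ, let v : Fin b → V and w : Fin b → W be families of elements, let φ : Λ(W) → R be an R-linear map, and let c ∈ Λ(W). In the graded tensor product Λ(V) ⊗' Λ(W), set δ := Σ_i ι(v_i) ⊗ ι(w_i). Then applying the R-linear map Λ(V) ⊗ Λ(W) → Λ(V) induced by x ⊗ y ↦ φ(y)·x to the element δ^k · (1 ⊗ c) gives (−1)^{k(k−1)/2} · k! · Σ_{I ⊆ Fin b, |I| = k} φ(ι(w_{i_1})⋯ι(w_{i_k})·c) · ι(v_{i_1})⋯ι(v_{i_k}), where for each k-element subset I the products are taken over the increasing enumeration i_1 < ⋯ < i_k of I. -/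
import Mathlib


open TensorProduct

section Helpers
open ExteriorAlgebra

variable {R V W : Type*} [CommRing R]
    [AddCommGroup V] [Module R V] [AddCommGroup W] [Module R W]


lemma prod_map_ι_mem {α : Type*} (f : α → V) (l : List α) :
    (l.map fun x => ι R (f x)).prod ∈ ⋀[R]^(l.length) V := by
  induction l with
  | nil => simpa using Submodule.one_le.mp le_rfl
  | cons a t ih =>
      simpa [pow_succ'] using Submodule.mul_mem_mul (LinearMap.mem_range_self _ (f a)) ih

variable (R) in
/-- auxiliary elementary tensor of products over a list of indices -/
noncomputable def Tml {b : ℕ} (v : Fin b → V) (w : Fin b → W) (l : List (Fin b)) :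
    (fun i : ℕ => ⋀[R]^i V) ᵍ⊗[R] (fun i : ℕ => ⋀[R]^i W) :=
  ((l.map fun i => ι R (v i)).prod) ᵍ⊗ₜ[R] ((l.map fun i => ι R (w i)).prod)

lemma neg_gtmul_neg (x : ExteriorAlgebra R V) (y : ExteriorAlgebra R W) :
    ((-x) ᵍ⊗ₜ[R] (-y) : (fun i : ℕ => ⋀[R]^i V) ᵍ⊗[R] (fun i : ℕ => ⋀[R]^i W))
      = x ᵍ⊗ₜ[R] y := by
  show (GradedTensorProduct.of R _ _) _ = (GradedTensorProduct.of R _ _) _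
  rw [neg_tmul, tmul_neg, neg_neg]

lemma Tml_cons {b : ℕ} (v : Fin b → V) (w : Fin b → W) (a : Fin b) (l : List (Fin b)) :
    Tml R v w (a :: l) =
      (GradedTensorProduct.of R _ _)
        (TensorProduct.map (LinearMap.mulLeft R (ι R (v a))) (LinearMap.mulLeft R (ι R (w a)))
          ((GradedTensorProduct.of R (fun i : ℕ => ⋀[R]^i V)
            (fun i : ℕ => ⋀[R]^i W)).symm (Tml R v w l))) := by
  simp only [Tml, GradedTensorProduct.tmul, GradedTensorProduct.of_symm_of,
    TensorProduct.map_tmul, LinearMap.mulLeft_apply, List.map_cons, List.prod_cons]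

lemma Tml_perm {b : ℕ} (v : Fin b → V) (w : Fin b → W) {l l' : List (Fin b)}
    (h : l.Perm l') : Tml R v w l = Tml R v w l' := by
  induction h with
  | nil => rfl
  | cons a _ ih => rw [Tml_cons, Tml_cons, ih]
  | swap x y t =>
      unfold Tml
      simp only [List.map_cons, List.prod_cons, ← mul_assoc]
      rw [show ι R (v y) * ι R (v x) = -(ι R (v x) * ι R (v y)) from
            eq_neg_of_add_eq_zero_left (by rw [add_comm]; exact ι_add_mul_swap _ _),
          show ι R (w y) * ι R (w x) = -(ι R (w x) * ι R (w y)) from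
            eq_neg_of_add_eq_zero_left (by rw [add_comm]; exact ι_add_mul_swap _ _),
          neg_mul, neg_mul, neg_gtmul_neg]
  | trans _ _ ih ih' => exact ih.trans ih'

lemma Tml_not_nodup {b : ℕ} (v : Fin b → V) (w : Fin b → W) {l : List (Fin b)}
    (h : ¬ l.Nodup) : Tml R v w l = 0 := by
  obtain ⟨a, ha⟩ := List.exists_duplicate_iff_not_nodup.mpr h
  have h2 : 2 ≤ l.count a := List.duplicate_iff_two_le_count.mp ha
  have h1 : a ∈ l := ha.mem
  have h1' : a ∈ l.erase a := by
    rw [← List.count_pos_iff, List.count_erase_self]; omega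
  have hperm : l.Perm (a :: a :: (l.erase a).erase a) :=
    (List.perm_cons_erase h1).trans ((List.perm_cons_erase h1').cons a)
  rw [Tml_perm v w hperm]
  unfold Tml
  simp only [List.map_cons, List.prod_cons, ← mul_assoc, ι_sq_zero, zero_mul]
  rw [show ((0 : ExteriorAlgebra R V) ᵍ⊗ₜ[R] _ :
      (fun i : ℕ => ⋀[R]^i V) ᵍ⊗[R] (fun i : ℕ => ⋀[R]^i W)) =
      (GradedTensorProduct.of R _ _) ((0 : ExteriorAlgebra R V) ⊗ₜ[R] _) from rfl, zero_tmul,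
    LinearEquiv.map_zero]

lemma ι_mem_one (x : V) : ι R x ∈ ⋀[R]^1 V := by
  simpa using LinearMap.mem_range_self _ x

lemma koszul_mul {b : ℕ} (v : Fin b → V) (w : Fin b → W) (i : Fin b) (l : List (Fin b)) :
    ((ι R (v i)) ᵍ⊗ₜ[R] (ι R (w i)) :
        (fun i : ℕ => ⋀[R]^i V) ᵍ⊗[R] (fun i : ℕ => ⋀[R]^i W)) * Tml R v w l
      = ((-1 : R) ^ l.length) • Tml R v w (i :: l) := by
  have := GradedTensorProduct.tmul_coe_mul_coe_tmul (R := R)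
    (fun i : ℕ => ⋀[R]^i V) (fun i : ℕ => ⋀[R]^i W)
    (ι R (v i)) (⟨ι R (w i), ι_mem_one _⟩ : ⋀[R]^1 W)
    (⟨(l.map fun j => ι R (v j)).prod, prod_map_ι_mem v l⟩ : ⋀[R]^(l.length) V)
    ((l.map fun j => ι R (w j)).prod)
  simp only [Submodule.coe_mk, one_mul] at this
  unfold Tml
  simp only [List.map_cons, List.prod_cons]
  rw [this]
  rw [Units.smul_def, ← Int.cast_smul_eq_zsmul R]
  norm_num

lemma sum_insert_compl {n : Type*} [Fintype n] [DecidableEq n] {M : Type*} [AddCommMonoid M]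
    (k : ℕ) (g : Finset n → M) :
    ∑ I ∈ Finset.powersetCard k (Finset.univ : Finset n), ∑ i ∈ Iᶜ, g (insert i I)
      = (k + 1) • ∑ J ∈ Finset.powersetCard (k + 1) (Finset.univ : Finset n), g J := by
  rw [Finset.smul_sum]
  have hr : ∀ J ∈ Finset.powersetCard (k + 1) (Finset.univ : Finset n),
      (k + 1) • g J = ∑ _i ∈ J, g J := by
    intro J hJ
    rw [Finset.sum_const, (Finset.mem_powersetCard_univ.mp hJ)]
  rw [Finset.sum_congr rfl hr, Finset.sum_sigma', Finset.sum_sigma']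
  refine Finset.sum_nbij' (fun a => ⟨insert a.2 a.1, a.2⟩) (fun a => ⟨a.1.erase a.2, a.2⟩)
    ?_ ?_ ?_ ?_ ?_
  · rintro ⟨I, i⟩ h
    simp only [Finset.mem_sigma, Finset.mem_powersetCard_univ, Finset.mem_compl] at h ⊢
    exact ⟨by rw [Finset.card_insert_of_notMem h.2, h.1], Finset.mem_insert_self _ _⟩
  · rintro ⟨J, i⟩ h
    simp only [Finset.mem_sigma, Finset.mem_powersetCard_univ, Finset.mem_compl] at h ⊢
    exact ⟨by rw [Finset.card_erase_of_mem h.2, h.1]; omega, by simp⟩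
  · rintro ⟨I, i⟩ h
    simp only [Finset.mem_sigma, Finset.mem_powersetCard_univ, Finset.mem_compl] at h
    simp [Finset.erase_insert h.2]
  · rintro ⟨J, i⟩ h
    simp only [Finset.mem_sigma, Finset.mem_powersetCard_univ, Finset.mem_compl] at h
    simp [Finset.insert_erase h.2]
  · rintro ⟨I, i⟩ _
    rfl

lemma exponent_succ (k : ℕ) : (k + 1) * ((k + 1) - 1) / 2 = k * (k - 1) / 2 + k := by
  rw [← Finset.sum_range_id, ← Finset.sum_range_id, Finset.sum_range_succ]

lemma delta_pow {b : ℕ} (v : Fin b → V) (w : Fin b → W) (k : ℕ) :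
    (∑ i : Fin b, ((ι R (v i)) ᵍ⊗ₜ[R] (ι R (w i)) :
        (fun i : ℕ => ⋀[R]^i V) ᵍ⊗[R] (fun i : ℕ => ⋀[R]^i W))) ^ k
      = ((-1 : R) ^ (k * (k - 1) / 2) * (k.factorial : R)) •
          ∑ I ∈ Finset.powersetCard k (Finset.univ : Finset (Fin b)),
            Tml R v w (I.sort (· ≤ ·)) := by
  induction k with
  | zero =>
      simp only [pow_zero, Finset.powersetCard_zero, Finset.sum_singleton, Finset.sort_empty]
      norm_num
      rfl
  | succ k ih =>
      rw [pow_succ', ih, mul_smul_comm, Finset.mul_sum]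
      have hterm : ∀ I ∈ Finset.powersetCard k (Finset.univ : Finset (Fin b)),
          (∑ i : Fin b, ((ι R (v i)) ᵍ⊗ₜ[R] (ι R (w i)) :
            (fun i : ℕ => ⋀[R]^i V) ᵍ⊗[R] (fun i : ℕ => ⋀[R]^i W))) * Tml R v w (I.sort (· ≤ ·))
          = (-1 : R) ^ k • ∑ i ∈ Iᶜ, Tml R v w ((insert i I).sort (· ≤ ·)) := by
        intro I hI
        rw [Finset.sum_mul]
        have hlen : (I.sort (· ≤ ·)).length = k := by
          rw [Finset.length_sort, Finset.mem_powersetCard_univ.mp hI]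
        calc ∑ i : Fin b, ((ι R (v i)) ᵍ⊗ₜ[R] (ι R (w i)) :
                (fun i : ℕ => ⋀[R]^i V) ᵍ⊗[R] (fun i : ℕ => ⋀[R]^i W)) * Tml R v w (I.sort (· ≤ ·))
            = ∑ i : Fin b, (-1 : R) ^ k • Tml R v w (i :: I.sort (· ≤ ·)) := by
              refine Finset.sum_congr rfl fun i _ => ?_
              rw [koszul_mul, hlen]
          _ = (-1 : R) ^ k • ∑ i : Fin b, Tml R v w (i :: I.sort (· ≤ ·)) := by
              rw [Finset.smul_sum]
          _ = (-1 : R) ^ k • ∑ i ∈ Iᶜ, Tml R v w ((insert i I).sort (· ≤ ·)) := by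
              congr 1
              rw [← Finset.sum_add_sum_compl I]
              have h0 : ∑ i ∈ I, Tml R v w (i :: I.sort (· ≤ ·)) = 0 := by
                refine Finset.sum_eq_zero fun i hi => ?_
                refine Tml_not_nodup v w fun hd => ?_
                exact (List.nodup_cons.mp hd).1 ((Finset.mem_sort _).mpr hi)
              rw [h0, zero_add]
              refine Finset.sum_congr rfl fun i hi => ?_
              refine Tml_perm v w ?_
              have h1 : i ∉ I := Finset.mem_compl.mp hi
              exact ((Finset.sort_perm_toList _ _).cons i).trans
                (((Finset.toList_insert h1).symm).trans (Finset.sort_perm_toList _ _).symm)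
      rw [Finset.sum_congr rfl hterm, ← Finset.smul_sum, sum_insert_compl k
        (fun J => Tml R v w (J.sort (· ≤ ·)))]
      rw [smul_smul, ← Nat.cast_smul_eq_nsmul R (k+1), smul_smul]
      congr 1
      rw [exponent_succ, Nat.factorial_succ, pow_add]
      push_cast
      ring

lemma Tml_mul_one_tmul {b : ℕ} (v : Fin b → V) (w : Fin b → W) (l : List (Fin b))
    (c : ExteriorAlgebra R W) :
    Tml R v w l * ((1 : ExteriorAlgebra R V) ᵍ⊗ₜ[R] c)
      = ((l.map fun i => ι R (v i)).prod) ᵍ⊗ₜ[R] ((l.map fun i => ι R (w i)).prod * c) := by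
  exact GradedTensorProduct.tmul_coe_mul_one_tmul
    (fun i : ℕ => ⋀[R]^i V) (fun i : ℕ => ⋀[R]^i W)
    ((l.map fun i => ι R (v i)).prod)
    (⟨(l.map fun i => ι R (w i)).prod, prod_map_ι_mem w l⟩ : ⋀[R]^(l.length) W) c


end Helpers

/-- Algebraic core of the fibre-integration formula `π_*(δ^k ∪ p^*(𝔠)) = ±k!·𝔨_𝔠`:
in the graded tensor product `Λ(V) ⊗' Λ(W)` with `δ := ∑ i, ι(vᵢ) ⊗ ι(wᵢ)`, applying
the `R`-linear map induced by `x ⊗ y ↦ φ(y) • x` to `δ^k · (1 ⊗ c)` gives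
`(-1)^(k(k-1)/2) · k! · ∑_{|I| = k} φ(ι(w_{i₁})⋯ι(w_{i_k})·c) · ι(v_{i₁})⋯ι(v_{i_k})`,
the products over each subset taken in increasing order of indices. -/
theorem pushforward_pow_sum_tmul
    {R V W : Type*} [CommRing R]
    [AddCommGroup V] [Module R V] [AddCommGroup W] [Module R W]
    (b k : ℕ) (v : Fin b → V) (w : Fin b → W)
    (φ : ExteriorAlgebra R W →ₗ[R] R) (c : ExteriorAlgebra R W)
    (Ψ : ((fun i : ℕ => ⋀[R]^i V) ᵍ⊗[R] (fun i : ℕ => ⋀[R]^i W)) →ₗ[R]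
      ExteriorAlgebra R V)
    (hΨ : ∀ (x : ExteriorAlgebra R V) (y : ExteriorAlgebra R W),
      Ψ (x ᵍ⊗ₜ[R] y) = φ y • x)
    (δ : (fun i : ℕ => ⋀[R]^i V) ᵍ⊗[R] (fun i : ℕ => ⋀[R]^i W))
    (hδ : δ = ∑ i : Fin b,
      ((ExteriorAlgebra.ι R (v i)) ᵍ⊗ₜ[R] (ExteriorAlgebra.ι R (w i)))) :
    Ψ (δ ^ k * ((1 : ExteriorAlgebra R V) ᵍ⊗ₜ[R] c)) =
      ((-1 : R) ^ (k * (k - 1) / 2) * (k.factorial : R)) •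
        ∑ I ∈ Finset.powersetCard k (Finset.univ : Finset (Fin b)),
          φ (((I.sort (· ≤ ·)).map fun i => ExteriorAlgebra.ι R (w i)).prod * c) •
            ((I.sort (· ≤ ·)).map fun i => ExteriorAlgebra.ι R (v i)).prod := by
  subst hδ
  rw [delta_pow v w k, smul_mul_assoc, Finset.sum_mul, map_smul, map_sum]
  congr 1
  refine Finset.sum_congr rfl fun I _ => ?_
  rw [Tml_mul_one_tmul, hΨ]
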